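/- Let f: ℝⁿ → ℝᵈ be measurable with ‖f(x)‖₂ ≤ 1 for all x, let σ > 0, let g(x) = E_{ε ~ N(0, σ²I)}[f(x + ε)], and let c₁ ≠ c₂ be unit vectors in ℝᵈ. Define φ(x) = ⟨g(x), c₁ - c₂⟩/(2‖c₁ - c₂‖₂) + 1/2. If φ(x) > 1/2 (equivalently ‖g(x) - c₁‖₂ < ‖g(x) - c₂‖₂), then for every perturbation δ with ‖δ‖₂ < σ·Φ⁻¹(φ(x)), we have ‖g(x + δ) - c₁‖₂ < ‖g(x + δ) - c₂‖₂. -/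

import Mathlib

/-!
Put `F y = ⟪y, c₁ - c₂⟫ / (2‖c₁ - c₂‖) + 1/2`; then `F ∘ f` takes values in `[0, 1]` and `φ` is its
Gaussian smoothing. By Cameron–Martin, the shifted law `N(δ, σ²I)` has density
`exp ((⟪ε, δ⟫ - ‖δ‖²/2) / σ²)` with respect to `N(0, σ²I)`. By Neyman–Pearson, among `[0, 1]`-valued
functions whose mean under `N(0, σ²I)` is at least `Φ a`, the mean under `N(δ, σ²I)` is smallest
for the indicator of the half-space `{⟪ε, δ⟫ ≤ σ a ‖δ‖}`, a sublevel set of that density, and then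
both means are values of `Φ`: this gives `Φ (a - ‖δ‖/σ) ≤ φ (x + δ)`. For `‖δ‖ < σ Φ⁻¹(φ x)` the
left side exceeds `Φ 0 = 1/2`, and since `‖c₁‖ = ‖c₂‖`, `φ > 1/2` says exactly that `g` is closer to
`c₁` than to `c₂`.
-/

open MeasureTheory ProbabilityTheory

/-- The isotropic Gaussian measure `N(0, σ²I)` on `ℝⁿ` (as `EuclideanSpace`). -/
noncomputable def gaussMeasure (n : ℕ) (σ : ℝ) : Measure (EuclideanSpace ℝ (Fin n)) :=
  (Measure.pi fun _ : Fin n => gaussianReal 0 (σ ^ 2).toNNReal).map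
    (EuclideanSpace.equiv (Fin n) ℝ).symm

/-- The standard Gaussian cumulative distribution function `Φ`. -/
noncomputable def stdGaussCDF : ℝ → ℝ := fun t => cdf (gaussianReal 0 1) t

/-- The inverse `Φ⁻¹` of the standard Gaussian CDF. -/
noncomputable def stdGaussCDFInv : ℝ → ℝ := Function.invFun stdGaussCDF

open Real Set
open scoped NNReal ENNReal RealInnerProductSpace

lemma stdGaussCDF_eq_integral (t : ℝ) :
    stdGaussCDF t = ∫ s in Iic t, gaussianPDFReal 0 1 s := by
  rw [stdGaussCDF, cdf_eq_real, measureReal_def, gaussianReal_apply_eq_integral _ one_ne_zero,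
    ENNReal.toReal_ofReal (setIntegral_nonneg measurableSet_Iic fun s _ ↦
      gaussianPDFReal_nonneg 0 1 s)]

lemma stdGaussCDF_sub (a b : ℝ) :
    stdGaussCDF b - stdGaussCDF a = ∫ s in a..b, gaussianPDFReal 0 1 s := by
  rw [stdGaussCDF_eq_integral, stdGaussCDF_eq_integral, intervalIntegral.integral_Iic_sub_Iic
    (integrable_gaussianPDFReal 0 1).integrableOn (integrable_gaussianPDFReal 0 1).integrableOn]

lemma stdGaussCDF_strictMono : StrictMono stdGaussCDF := fun a b hab ↦ by
  have hpos : 0 < ∫ s in a..b, gaussianPDFReal 0 1 s :=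
    intervalIntegral.intervalIntegral_pos_of_pos (integrable_gaussianPDFReal 0 1).intervalIntegrable
      (fun t ↦ gaussianPDFReal_pos 0 1 t one_ne_zero) hab
  linarith [stdGaussCDF_sub a b]

lemma continuous_stdGaussCDF : Continuous stdGaussCDF := by
  have h : stdGaussCDF = fun t ↦ stdGaussCDF 0 + ∫ s in (0 : ℝ)..t, gaussianPDFReal 0 1 s := by
    funext t
    rw [← stdGaussCDF_sub]
    ring
  rw [h]
  exact continuous_const.add (intervalIntegral.continuous_primitive
    (fun _ _ ↦ (integrable_gaussianPDFReal 0 1).intervalIntegrable) 0)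

lemma stdGaussCDF_zero : stdGaussCDF 0 = 1 / 2 := by
  have := nullSingletonClass_gaussianReal (μ := 0) one_ne_zero
  have hsymm : (gaussianReal 0 1).real (Iic 0)ᶜ = (gaussianReal 0 1).real (Iic 0) := by
    conv_lhs => rw [← neg_zero, ← gaussianReal_map_neg]
    rw [map_measureReal_apply measurable_neg measurableSet_Iic.compl, neg_zero,
      show Neg.neg ⁻¹' (Iic (0 : ℝ))ᶜ = Iio 0 by ext; simp, measureReal_congr Iio_ae_eq_Iic]
  rw [probReal_compl_eq_one_sub measurableSet_Iic] at hsymm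
  rw [stdGaussCDF, cdf_eq_real]
  linarith

lemma stdGaussCDF_stdGaussCDFInv {p : ℝ} (hp₀ : 0 < p) (hp₁ : p < 1) :
    stdGaussCDF (stdGaussCDFInv p) = p :=
  Function.invFun_eq <| mem_range_of_exists_le_of_exists_ge continuous_stdGaussCDF
    (((tendsto_cdf_atBot _).eventually (gt_mem_nhds hp₀)).exists.imp fun _ ↦ le_of_lt)
    (((tendsto_cdf_atTop _).eventually (lt_mem_nhds hp₁)).exists.imp fun _ ↦ le_of_lt)

/-- `stdGaussCDFInv 1` is a junk value, but at `p = 1` every `a` satisfies `Φ a ≤ p`. -/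
lemma exists_lt_and_stdGaussCDF_le {p r : ℝ} (hp₀ : 0 < p) (hp₁ : p ≤ 1)
    (hr : r < stdGaussCDFInv p) : ∃ a, r < a ∧ stdGaussCDF a ≤ p := by
  rcases hp₁.lt_or_eq with hp₁ | rfl
  · exact ⟨_, hr, (stdGaussCDF_stdGaussCDFInv hp₀ hp₁).le⟩
  · exact ⟨r + 1, by linarith, cdf_le_one _ _⟩

theorem measureReal_withDensity_le_integral_of_sublevel {α : Type*} [MeasurableSpace α]
    {μ : Measure α} [IsFiniteMeasure μ] {L : α → ℝ} (hL₀ : ∀ x, 0 ≤ L x)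
    (hLi : Integrable L μ) {S : Set α} (hS : MeasurableSet S) {c : ℝ} (hc : 0 ≤ c)
    (hSc : ∀ x ∈ S, L x ≤ c) (hcS : ∀ x ∉ S, c ≤ L x) {F : α → ℝ} (hFm : Measurable F)
    (hF : ∀ x, F x ∈ Icc 0 1) (hSF : μ.real S ≤ ∫ x, F x ∂μ) :
    (μ.withDensity fun x ↦ ENNReal.ofReal (L x)).real S ≤
      ∫ x, F x ∂μ.withDensity fun x ↦ ENNReal.ofReal (L x) := by
  set ν := μ.withDensity fun x ↦ ENNReal.ofReal (L x)
  have : IsFiniteMeasure ν := isFiniteMeasure_withDensity_ofReal hLi.2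
  set G := F - S.indicator 1
  have hG : ∀ x, |G x| ≤ 1 := fun x ↦ by
    obtain ⟨h₀, h₁⟩ := hF x
    by_cases hx : x ∈ S <;> simp [G, hx, abs_le] <;> constructor <;> linarith
  have hGm : Measurable G := hFm.sub (measurable_one.indicator hS)
  have hGint (ρ : Measure α) [IsFiniteMeasure ρ] : ∫ x, G x ∂ρ = ∫ x, F x ∂ρ - ρ.real S := by
    rw [← integral_indicator_one hS, ← integral_sub]
    · rfl
    · exact .of_bound hFm.aestronglyMeasurable 1 (ae_of_all _ fun x ↦ by
        rw [Real.norm_eq_abs, abs_of_nonneg (hF x).1]; exact (hF x).2)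
    · exact (integrable_const 1).indicator hS
  -- the likelihood ratio `L` lies above the threshold `c` exactly where `G ≥ 0`
  have hpt : ∀ x, c * G x ≤ L x * G x := fun x ↦ by
    by_cases hx : x ∈ S
    · have : G x ≤ 0 := by simp [G, hx, (hF x).2]
      nlinarith [hSc x hx]
    · have : 0 ≤ G x := by simp [G, hx, (hF x).1]
      nlinarith [hcS x hx]
  have hνG : ∫ x, G x ∂ν = ∫ x, L x * G x ∂μ := by
    rw [integral_withDensity_eq_integral_toReal_smul₀ hLi.1.aemeasurable.ennreal_ofReal
      (ae_of_all _ fun _ ↦ ENNReal.ofReal_lt_top)]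
    simp_rw [ENNReal.toReal_ofReal (hL₀ _), smul_eq_mul]
  have hGi : Integrable G μ := .of_bound hGm.aestronglyMeasurable 1 (ae_of_all _ hG)
  have hLG : Integrable (fun x ↦ L x * G x) μ := by
    simpa only [mul_comm] using hLi.bdd_mul hGm.aestronglyMeasurable (ae_of_all _ hG)
  have : 0 ≤ ∫ x, G x ∂ν := by
    calc (0 : ℝ) ≤ c * ∫ x, G x ∂μ := mul_nonneg hc (by rw [hGint μ]; linarith)
      _ = ∫ x, c * G x ∂μ := (integral_const_mul c G).symm
      _ ≤ ∫ x, L x * G x ∂μ := integral_mono (hGi.const_mul c) hLG hpt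
      _ = ∫ x, G x ∂ν := hνG.symm
  linarith [hGint ν]

lemma gaussianReal_eq_withDensity (m : ℝ) {v : ℝ≥0} (hv : v ≠ 0) :
    gaussianReal m v = (gaussianReal 0 v).withDensity
      fun t ↦ ENNReal.ofReal (exp ((m * t - m ^ 2 / 2) / v)) := by
  rw [gaussianReal_of_var_ne_zero _ hv, gaussianReal_of_var_ne_zero _ hv,
    ← withDensity_mul _ (measurable_gaussianPDF _ _) (by fun_prop)]
  congr 1
  funext t
  have hv' : (v : ℝ) ≠ 0 := by exact_mod_cast hv
  simp only [Pi.mul_apply, gaussianPDF, gaussianPDFReal]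
  rw [← ENNReal.ofReal_mul (by positivity), mul_assoc _ (rexp _), ← Real.exp_add]
  congr 3
  field_simp
  ring

lemma pi_withDensity {ι : Type*} [Fintype ι] {X : ι → Type*} [∀ i, MeasurableSpace (X i)]
    (μ : ∀ i, Measure (X i)) [∀ i, IsProbabilityMeasure (μ i)] {ρ : ∀ i, X i → ℝ≥0∞}
    (hρ : ∀ i, Measurable (ρ i)) [∀ i, SigmaFinite ((μ i).withDensity (ρ i))] :
    Measure.pi (fun i ↦ (μ i).withDensity (ρ i)) =
      (Measure.pi μ).withDensity fun x ↦ ∏ i, ρ i (x i) := by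
  refine Measure.pi_eq fun s hs ↦ ?_
  have hbox : (univ.pi s).indicator (fun x ↦ ∏ i, ρ i (x i)) =
      fun x ↦ ∏ i, (s i).indicator (ρ i) (x i) := by
    funext x
    classical simp [Set.indicator, Finset.prod_ite_zero]
  have hρs : ∀ i, Measurable ((s i).indicator (ρ i)) := fun i ↦ (hρ i).indicator (hs i)
  rw [withDensity_apply _ (.univ_pi hs), ← lintegral_indicator (.univ_pi hs), hbox,
    lintegral_prod_eq_prod_lintegral_of_indepFun _ _ (iIndepFun_pi fun i ↦ (hρs i).aemeasurable)
      fun i ↦ (hρs i).comp (measurable_pi_apply i)]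
  refine Finset.prod_congr rfl fun i _ ↦ ?_
  rw [withDensity_apply _ (hs i), ← lintegral_indicator (hs i),
    ← (measurePreserving_eval μ i).lintegral_comp (hρs i)]

lemma MeasurableEquiv.map_withDensity_comp {α β : Type*} [MeasurableSpace α] [MeasurableSpace β]
    (e : α ≃ᵐ β) (μ : Measure α) {ρ : β → ℝ≥0∞} (hρ : Measurable ρ) :
    (μ.withDensity (ρ ∘ e)).map e = (μ.map e).withDensity ρ := by
  ext s hs
  rw [Measure.map_apply e.measurable hs, withDensity_apply _ hs,
    withDensity_apply _ (e.measurable hs), setLIntegral_map hs hρ e.measurable]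
  rfl

instance isProbabilityMeasure_gaussMeasure (n : ℕ) (σ : ℝ) :
    IsProbabilityMeasure (gaussMeasure n σ) :=
  Measure.isProbabilityMeasure_map (by fun_prop)

theorem gaussMeasure_map_const_add {n : ℕ} {σ : ℝ} (hσ : σ ≠ 0) (δ : EuclideanSpace ℝ (Fin n)) :
    (gaussMeasure n σ).map (δ + ·) = (gaussMeasure n σ).withDensity
      fun ε ↦ ENNReal.ofReal (exp ((⟪ε, δ⟫ - ‖δ‖ ^ 2 / 2) / σ ^ 2)) := by
  set v := (σ ^ 2).toNNReal
  have hv : v ≠ 0 := by simpa [v] using hσ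
  have hv' : (v : ℝ) = σ ^ 2 := Real.coe_toNNReal _ (sq_nonneg σ)
  set ρ : ℝ → ℝ → ℝ≥0∞ := fun m t ↦ ENNReal.ofReal (exp ((m * t - m ^ 2 / 2) / v))
  have : ∀ i, SigmaFinite ((gaussianReal 0 v).withDensity (ρ (δ i))) := fun i ↦ by
    rw [← gaussianReal_eq_withDensity _ hv]; infer_instance
  have hpi : (Measure.pi fun _ : Fin n ↦ gaussianReal 0 v).map (fun x i ↦ δ i + x i) =
      (Measure.pi fun _ ↦ gaussianReal 0 v).withDensity fun x ↦ ∏ i, ρ (δ i) (x i) := by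
    rw [Measure.pi_map_pi (fun _ ↦ by fun_prop), ← pi_withDensity _ fun i ↦ by fun_prop]
    congr 1
    funext i
    rw [gaussianReal_map_const_add, zero_add, gaussianReal_eq_withDensity _ hv]
  have he : ⇑(EuclideanSpace.equiv (Fin n) ℝ).symm = MeasurableEquiv.toLp 2 (Fin n → ℝ) := rfl
  have hdens : (fun x ↦ ∏ i, ρ (δ i) (x i)) = (fun ε : EuclideanSpace ℝ (Fin n) ↦
      ENNReal.ofReal (exp ((⟪ε, δ⟫ - ‖δ‖ ^ 2 / 2) / σ ^ 2))) ∘ MeasurableEquiv.toLp 2 _ := by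
    funext x
    rw [← ENNReal.ofReal_prod_of_nonneg fun _ _ ↦ (exp_pos _).le, ← Real.exp_sum]
    simp [PiLp.inner_apply, EuclideanSpace.real_norm_sq_eq, hv', ← Finset.sum_div,
      Finset.sum_sub_distrib, mul_comm]
  rw [gaussMeasure, he, Measure.map_map (by fun_prop) (by fun_prop),
    show (δ + ·) ∘ MeasurableEquiv.toLp 2 (Fin n → ℝ) =
      MeasurableEquiv.toLp 2 _ ∘ (fun x i ↦ δ i + x i) from rfl,
    ← Measure.map_map (by fun_prop) (by fun_prop), hpi, hdens,
    MeasurableEquiv.map_withDensity_comp _ _ (by fun_prop)]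

lemma gaussianReal_zero_one_map_const_mul (s : ℝ) :
    (gaussianReal 0 1).map (s * ·) = gaussianReal 0 (s ^ 2).toNNReal := by
  rw [gaussianReal_map_const_mul, mul_zero, mul_one, Real.toNNReal_of_nonneg]

lemma gaussMeasure_eq_map_stdGaussian (n : ℕ) (σ : ℝ) :
    gaussMeasure n σ = (stdGaussian (EuclideanSpace ℝ (Fin n))).map (σ • ·) := by
  rw [← map_pi_eq_stdGaussian, Measure.map_map (by fun_prop) (by fun_prop),
    show (σ • ·) ∘ WithLp.toLp 2 = WithLp.toLp 2 ∘ fun (x : Fin n → ℝ) i ↦ σ * x i from rfl,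
    ← Measure.map_map (by fun_prop) (by fun_prop), Measure.pi_map_pi (fun _ ↦ by fun_prop)]
  simp_rw [gaussianReal_zero_one_map_const_mul]
  rfl

lemma gaussMeasure_map_inner (n : ℕ) (σ : ℝ) (w : EuclideanSpace ℝ (Fin n)) :
    (gaussMeasure n σ).map (⟪·, w⟫) = gaussianReal 0 ((σ * ‖w‖) ^ 2).toNNReal := by
  set L : StrongDual ℝ (EuclideanSpace ℝ (Fin n)) := σ • innerSL ℝ w
  have hL : (⟪·, w⟫) ∘ (σ • ·) = ⇑L := by
    funext ε
    simp [L, real_inner_smul_right, real_inner_comm]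
  rw [gaussMeasure_eq_map_stdGaussian, Measure.map_map (by fun_prop) (by fun_prop), hL,
    IsGaussian.map_eq_gaussianReal, integral_strongDual_stdGaussian, variance_dual_stdGaussian,
    norm_smul, innerSL_apply_norm, Real.norm_eq_abs, mul_pow, sq_abs, mul_pow]

lemma gaussianReal_real_Iic {s : ℝ} (hs : 0 < s) (t : ℝ) :
    (gaussianReal 0 (s ^ 2).toNNReal).real (Iic t) = stdGaussCDF (t / s) := by
  rw [← gaussianReal_zero_one_map_const_mul, map_measureReal_apply (by fun_prop)
    measurableSet_Iic, preimage_const_mul_Iic₀ t hs, stdGaussCDF, cdf_eq_real]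

lemma gaussMeasure_real_inner_le {n : ℕ} {σ : ℝ} (hσ : 0 < σ) {w : EuclideanSpace ℝ (Fin n)}
    (hw : w ≠ 0) (t : ℝ) :
    (gaussMeasure n σ).real {ε | ⟪ε, w⟫ ≤ t} = stdGaussCDF (t / (σ * ‖w‖)) := by
  rw [← gaussianReal_real_Iic (by positivity), ← gaussMeasure_map_inner,
    map_measureReal_apply (by fun_prop) measurableSet_Iic]
  rfl

theorem stdGaussCDF_sub_le_integral_comp_const_add {n : ℕ} {σ : ℝ} (hσ : 0 < σ)
    {F : EuclideanSpace ℝ (Fin n) → ℝ} (hFm : Measurable F) (hF : ∀ x, F x ∈ Icc 0 1) {a : ℝ}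
    (ha : stdGaussCDF a ≤ ∫ ε, F ε ∂gaussMeasure n σ) (δ : EuclideanSpace ℝ (Fin n)) :
    stdGaussCDF (a - ‖δ‖ / σ) ≤ ∫ ε, F (δ + ε) ∂gaussMeasure n σ := by
  rcases eq_or_ne δ 0 with rfl | hδ
  · simpa using ha
  set μ := gaussMeasure n σ
  set L : EuclideanSpace ℝ (Fin n) → ℝ := fun ε ↦ exp ((⟪ε, δ⟫ - ‖δ‖ ^ 2 / 2) / σ ^ 2)
  set S := {ε : EuclideanSpace ℝ (Fin n) | ⟪ε, δ⟫ ≤ σ * a * ‖δ‖}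
  have hS : MeasurableSet S := measurableSet_le (by fun_prop) (by fun_prop)
  have hCM : μ.map (δ + ·) = μ.withDensity fun ε ↦ ENNReal.ofReal (L ε) :=
    gaussMeasure_map_const_add hσ.ne' δ
  have hLi : Integrable L μ := by
    refine (lintegral_ofReal_ne_top_iff_integrable (by fun_prop)
      (ae_of_all _ fun _ ↦ (exp_pos _).le)).1 ?_
    rw [← setLIntegral_univ, ← withDensity_apply _ .univ, ← hCM]
    exact measure_ne_top _ _
  have hμS : μ.real S = stdGaussCDF a := by
    rw [gaussMeasure_real_inner_le hσ hδ]
    congr 1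
    field_simp
  have hshiftS : (μ.map (δ + ·)).real S = stdGaussCDF (a - ‖δ‖ / σ) := by
    have : (δ + ·) ⁻¹' S = {ε | ⟪ε, δ⟫ ≤ σ * a * ‖δ‖ - ‖δ‖ ^ 2} := by
      ext ε
      simp only [S, mem_preimage, mem_ofPred_eq, inner_add_left, real_inner_self_eq_norm_sq]
      constructor <;> intro <;> linarith
    rw [map_measureReal_apply (by fun_prop) hS, this, gaussMeasure_real_inner_le hσ hδ]
    congr 1
    field_simp
  set c := exp ((σ * a * ‖δ‖ - ‖δ‖ ^ 2 / 2) / σ ^ 2)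
  have hSL : ∀ ε, ε ∈ S ↔ L ε ≤ c := fun ε ↦ by
    simp only [S, L, c, mem_ofPred_eq, exp_le_exp]
    rw [div_le_div_iff_of_pos_right (by positivity)]
    constructor <;> intro <;> linarith
  calc stdGaussCDF (a - ‖δ‖ / σ) = (μ.map (δ + ·)).real S := hshiftS.symm
    _ ≤ ∫ ε, F ε ∂μ.map (δ + ·) := by
      rw [hCM]
      exact measureReal_withDensity_le_integral_of_sublevel (fun _ ↦ (exp_pos _).le) hLi hS
        (exp_pos _).le (fun ε ↦ (hSL ε).1) (fun ε hε ↦ le_of_not_ge (mt (hSL ε).2 hε)) hFm hF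
        (hμS ▸ ha)
    _ = ∫ ε, F (δ + ε) ∂μ := integral_map (by fun_prop) hFm.aestronglyMeasurable

lemma norm_sub_lt_norm_sub_iff_inner_pos {E : Type*} [NormedAddCommGroup E]
    [InnerProductSpace ℝ E] {c₁ c₂ : E} (h : ‖c₁‖ = ‖c₂‖) (y : E) :
    ‖y - c₁‖ < ‖y - c₂‖ ↔ 0 < ⟪y, c₁ - c₂⟫ := by
  rw [← sq_lt_sq₀ (norm_nonneg _) (norm_nonneg _), norm_sub_sq_real, norm_sub_sq_real, h,
    inner_sub_right]
  constructor <;> intro <;> linarith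

lemma inner_div_two_norm_add_half_mem_Icc {E : Type*} [NormedAddCommGroup E]
    [InnerProductSpace ℝ E] {y w : E} (hy : ‖y‖ ≤ 1) (hw : w ≠ 0) :
    ⟪y, w⟫ / (2 * ‖w‖) + 1 / 2 ∈ Icc (0 : ℝ) 1 := by
  have hw' : 0 < 2 * ‖w‖ := by positivity
  have hyw : |⟪y, w⟫| ≤ ‖w‖ :=
    (abs_real_inner_le_norm y w).trans (mul_le_of_le_one_left (norm_nonneg w) hy)
  rw [abs_le] at hyw
  constructor
  · have : -(1 / 2) ≤ ⟪y, w⟫ / (2 * ‖w‖) := by rw [le_div_iff₀ hw']; linarith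
    linarith
  · have : ⟪y, w⟫ / (2 * ‖w‖) ≤ 1 / 2 := by rw [div_le_iff₀ hw']; linarith
    linarith

lemma integral_inner_div_add_const {α E : Type*} [MeasurableSpace α] [NormedAddCommGroup E]
    [InnerProductSpace ℝ E] [CompleteSpace E] {μ : Measure α} [IsProbabilityMeasure μ]
    {f : α → E} (hf : Integrable f μ) (w : E) (r b : ℝ) :
    ∫ x, (⟪f x, w⟫ / r + b) ∂μ = ⟪∫ x, f x ∂μ, w⟫ / r + b := by
  rw [integral_add ((hf.inner_const w).div_const r) (integrable_const b), integral_div,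
    integral_const, probReal_univ, one_smul, real_inner_comm, ← integral_inner hf]
  simp_rw [real_inner_comm]

theorem two_centroid_certification
    (n d : ℕ) (σ : ℝ) (hσ : 0 < σ)
    (f : EuclideanSpace ℝ (Fin n) → EuclideanSpace ℝ (Fin d))
    (hfm : Measurable f) (hf : ∀ x, ‖f x‖ ≤ 1)
    (c₁ c₂ : EuclideanSpace ℝ (Fin d)) (hc₁ : ‖c₁‖ = 1) (hc₂ : ‖c₂‖ = 1)
    (hne : c₁ ≠ c₂)
    (g : EuclideanSpace ℝ (Fin n) → EuclideanSpace ℝ (Fin d))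
    (hg : ∀ x, g x = ∫ ε, f (x + ε) ∂(gaussMeasure n σ))
    (φ : EuclideanSpace ℝ (Fin n) → ℝ)
    (hφ : ∀ x, φ x = inner ℝ (g x) (c₁ - c₂) / (2 * ‖c₁ - c₂‖) + 1 / 2)
    (x : EuclideanSpace ℝ (Fin n)) (hx : 1 / 2 < φ x) :
    ∀ δ : EuclideanSpace ℝ (Fin n), ‖δ‖ < σ * stdGaussCDFInv (φ x) →
      ‖g (x + δ) - c₁‖ < ‖g (x + δ) - c₂‖ := by
  intro δ hδ
  set F : EuclideanSpace ℝ (Fin d) → ℝ := fun y ↦ ⟪y, c₁ - c₂⟫ / (2 * ‖c₁ - c₂‖) + 1 / 2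
  have hF : ∀ z, F (f z) ∈ Icc 0 1 := fun z ↦
    inner_div_two_norm_add_half_mem_Icc (hf z) (sub_ne_zero.2 hne)
  have hφF : ∀ z, φ z = ∫ ε, F (f (z + ε)) ∂gaussMeasure n σ := fun z ↦ by
    rw [hφ, hg]
    exact (integral_inner_div_add_const (f := fun ε ↦ f (z + ε))
      (.of_bound (hfm.comp (measurable_const_add z)).aestronglyMeasurable 1
        (ae_of_all _ fun _ ↦ hf _)) _ _ _).symm
  have hφ₁ : φ x ≤ 1 := by
    calc φ x = ∫ ε, F (f (x + ε)) ∂gaussMeasure n σ := hφF x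
      _ ≤ ∫ _, 1 ∂gaussMeasure n σ := integral_mono_of_nonneg (ae_of_all _ fun _ ↦ (hF _).1)
          (integrable_const 1) (ae_of_all _ fun _ ↦ (hF _).2)
      _ = 1 := by simp
  obtain ⟨a, hδa, haφ⟩ := exists_lt_and_stdGaussCDF_le (by linarith) hφ₁ ((div_lt_iff₀' hσ).2 hδ)
  have hsmooth := stdGaussCDF_sub_le_integral_comp_const_add hσ (F := fun ε ↦ F (f (x + ε)))
    (by fun_prop) (fun ε ↦ hF _) (hφF x ▸ haφ) δ
  have : 1 / 2 < φ (x + δ) := by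
    calc 1 / 2 = stdGaussCDF 0 := stdGaussCDF_zero.symm
      _ < stdGaussCDF (a - ‖δ‖ / σ) := stdGaussCDF_strictMono (by linarith)
      _ ≤ φ (x + δ) := by simpa only [hφF, add_assoc] using hsmooth
  rw [norm_sub_lt_norm_sub_iff_inner_pos (hc₁.trans hc₂.symm),
    ← div_pos_iff_of_pos_right (b := 2 * ‖c₁ - c₂‖)
      (mul_pos two_pos (norm_pos_iff.2 (sub_ne_zero.2 hne)))]
  linarith [hφ (x + δ)]
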